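/- (Generalization bound with joint distributions on multiple source domains, Theorem A.3.) Let X be a measurable space and Y = {−1, 1}. Let M be a countable set of measurable functions from X × Y to {−1, 1}. Let N ≥ 1, and for each i ∈ {1, …, N} let P_i be a probability measure on X and κ_i a Markov kernel from X to Y; let P_T be a probability measure on X and κ_T a Markov kernel from X to Y. Let π_1, …, π_N ≥ 0 with Σ_i π_i = 1, and let κ̄ be a Markov kernel from X to Y satisfying Σ_i π_i (P_i ⊗ κ_i) = (Σ_i π_i P_i) ⊗ κ̄. Let H be a nonempty set of measurable hypotheses, and let h be a measurable hypothesis with m_h ∈ M and the constant function 1 ∈ M. Define ζ_in := max_{1 ≤ i, j ≤ N} d^{κ_i}_{M△M}(P_i, P_j), η_in := max_{1 ≤ i, j ≤ N} ∫_X D_M(κ_i, κ_j)(x) dP_j(x), ζ_out := d^{κ̄}_{M△M}(Σ_i π_i P_i, P_T), η_out := ∫_X D_M(κ̄, κ_T)(x) dP_T(x), and λ_π := inf_{h' ∈ H} ( Σ_i π_i ε_{P_i ⊗ κ_i}(h') + ε_{P_T ⊗ κ_T}(h') ). Then ε_{P_T ⊗ κ_T}(h) ≤ Σ_i π_i ε_{P_i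 ⊗ κ_i}(h) + ζ_in + η_in + ζ_out + η_out + λ_π. -/

import Mathlib

/-!
The target risk of `h` is the `κT`-mass of the sections of `A(m_h, 1)`, integrated against `PT`.
Replacing `κT` by `κbar` pointwise costs at most `D_M(κbar, κT)`, hence `η_out` after integration;
replacing the marginal `PT` by the source mixture `∑ πᵢ Pᵢ` costs at most `ζ_out`. By the mixture
identity, the `κbar`-risk under `∑ πᵢ Pᵢ` is exactly `∑ πᵢ ε_{Pᵢ ⊗ κᵢ}(h)`. The remaining terms
`ζ_in`, `η_in` and `λ_π` are nonnegative.
-/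

open MeasureTheory ProbabilityTheory
open scoped ENNReal NNReal

noncomputable section

namespace IDG

variable {X : Type*} [MeasurableSpace X]

/-- The risk of a hypothesis `h : X → ℤˣ` (values in `{-1, 1}`) with respect to a joint
distribution `μ` on `X × ℤˣ`: the measure of the error set `{(x, y) | h x ≠ y}`. -/
def risk (μ : Measure (X × ℤˣ)) (h : X → ℤˣ) : ℝ :=
  (μ {z : X × ℤˣ | h z.1 ≠ z.2}).toReal

/-- The symmetric-difference set `A(m, m') = {z | m z ≠ m' z}`. -/
def errSet (m m' : X × ℤˣ → ℤˣ) : Set (X × ℤˣ) := {z | m z ≠ m' z}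

/-- The `x`-section of `A(m, m')`. -/
def xsec (m m' : X × ℤˣ → ℤˣ) (x : X) : Set ℤˣ := {y | m (x, y) ≠ m' (x, y)}

/-- The `M△M`-divergence between two measures on `X × ℤˣ`. -/
def dMM (M : Set (X × ℤˣ → ℤˣ)) (μ ν : Measure (X × ℤˣ)) : ℝ :=
  ⨆ m : M, ⨆ m' : M, |(μ (errSet m.1 m'.1)).toReal - (ν (errSet m.1 m'.1)).toReal|

/-- The `κ`-weighted `M△M`-divergence between two measures on `X`. -/
def dMMker (M : Set (X × ℤˣ → ℤˣ)) (κ : Kernel X ℤˣ) (P Q : Measure X) : ℝ :=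
  ⨆ m : M, ⨆ m' : M,
    |(∫ x, (κ x (xsec m.1 m'.1 x)).toReal ∂P) - (∫ x, (κ x (xsec m.1 m'.1 x)).toReal ∂Q)|

/-- Pointwise posterior discrepancy between two kernels. -/
def DM (M : Set (X × ℤˣ → ℤˣ)) (κ κ' : Kernel X ℤˣ) (x : X) : ℝ :=
  ⨆ m : M, ⨆ m' : M, |(κ x (xsec m.1 m'.1 x)).toReal - (κ' x (xsec m.1 m'.1 x)).toReal|

instance : DiscreteMeasurableSpace ℤˣ :=
  ⟨fun s => ⟨(↑) '' s, .of_discrete, Set.preimage_image_eq s Units.val_injective⟩⟩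

lemma le_ciSup₂_of_forall_le {ι ι' : Sort*} {f : ι → ι' → ℝ} {C : ℝ} (hC : ∀ i j, f i j ≤ C)
    (i : ι) (j : ι') : f i j ≤ ⨆ i, ⨆ j, f i j :=
  le_ciSup₂ ⟨C, by rintro _ ⟨_, ⟨i, rfl⟩, j, rfl⟩; exact hC i j⟩ i j

lemma abs_toReal_sub_toReal_le_one {Ω : Type*} [MeasurableSpace Ω] (μ ν : Measure Ω)
    [IsProbabilityMeasure μ] [IsProbabilityMeasure ν] (s t : Set Ω) :
    |(μ s).toReal - (ν t).toReal| ≤ 1 :=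
  abs_sub_le_of_nonneg_of_le ENNReal.toReal_nonneg measureReal_le_one
    ENNReal.toReal_nonneg measureReal_le_one

lemma isProbabilityMeasure_sum_smul {ι Ω : Type*} [Fintype ι] [MeasurableSpace Ω]
    (π : ι → ℝ≥0) (hπ : ∑ i, π i = 1) (P : ι → Measure Ω) [∀ i, IsProbabilityMeasure (P i)] :
    IsProbabilityMeasure (∑ i, (π i : ℝ≥0∞) • P i) :=
  ⟨by simp [← ENNReal.ofNNReal_finsetSum, hπ]⟩

lemma integral_kernel_toReal_le_one {Ω β : Type*} [MeasurableSpace Ω] [MeasurableSpace β]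
    (Q : Measure Ω) [IsProbabilityMeasure Q] (κ : Kernel Ω β) [IsMarkovKernel κ]
    (s : Ω → Set β) : ∫ x, (κ x (s x)).toReal ∂Q ≤ 1 := by
  simpa using integral_mono_of_nonneg (ae_of_all _ fun x => ENNReal.toReal_nonneg)
    (integrable_const (μ := Q) (1 : ℝ)) (ae_of_all _ fun x => measureReal_le_one (μ := κ x))

lemma risk_nonneg (μ : Measure (X × ℤˣ)) (h : X → ℤˣ) : 0 ≤ risk μ h := ENNReal.toReal_nonneg

omit [MeasurableSpace X] in
lemma errSet_margin_one (h : X → ℤˣ) :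
    errSet (fun z : X × ℤˣ => z.2 * h z.1) (fun _ => 1) = {z | h z.1 ≠ z.2} := by
  ext z
  simp [errSet, mul_eq_one_iff_eq_inv, Int.units_inv_eq_self, eq_comm]

lemma measurableSet_errSet {m m' : X × ℤˣ → ℤˣ} (hm : Measurable m) (hm' : Measurable m') :
    MeasurableSet (errSet m m') :=
  (measurableSet_eq_fun hm hm').compl

lemma measurable_kernel_xsec (κ : Kernel X ℤˣ) [IsSFiniteKernel κ] {m m' : X × ℤˣ → ℤˣ}
    (hm : Measurable m) (hm' : Measurable m') :
    Measurable fun x => (κ x (xsec m m' x)).toReal :=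
  (Kernel.measurable_kernel_prodMk_left (measurableSet_errSet hm hm')).ennreal_toReal

lemma integrable_kernel_xsec (Q : Measure X) [IsFiniteMeasure Q] (κ : Kernel X ℤˣ)
    [IsMarkovKernel κ] {m m' : X × ℤˣ → ℤˣ} (hm : Measurable m) (hm' : Measurable m') :
    Integrable (fun x => (κ x (xsec m m' x)).toReal) Q :=
  .of_bound (measurable_kernel_xsec κ hm hm').aestronglyMeasurable 1 (ae_of_all _ fun x => by
    rw [Real.norm_of_nonneg ENNReal.toReal_nonneg]; exact measureReal_le_one)

lemma toReal_compProd_errSet (Q : Measure X) [SFinite Q] (κ : Kernel X ℤˣ) [IsFiniteKernel κ]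
    {m m' : X × ℤˣ → ℤˣ} (hm : Measurable m) (hm' : Measurable m') :
    ((Q ⊗ₘ κ) (errSet m m')).toReal = ∫ x, (κ x (xsec m m' x)).toReal ∂Q := by
  rw [Measure.compProd_apply (measurableSet_errSet hm hm'), integral_toReal]
  · rfl
  · exact (Kernel.measurable_kernel_prodMk_left (measurableSet_errSet hm hm')).aemeasurable
  · exact ae_of_all _ fun x => measure_lt_top _ _

lemma risk_compProd_eq_integral (Q : Measure X) [SFinite Q] (κ : Kernel X ℤˣ) [IsFiniteKernel κ]
    {h : X → ℤˣ} (hmh : Measurable fun z : X × ℤˣ => z.2 * h z.1) :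
    risk (Q ⊗ₘ κ) h = ∫ x, (κ x (xsec (fun z => z.2 * h z.1) (fun _ => 1) x)).toReal ∂Q := by
  rw [← toReal_compProd_errSet Q κ hmh measurable_const, errSet_margin_one]
  rfl

lemma risk_sum_smul {ι : Type*} [Fintype ι] (π : ι → ℝ≥0) (μ : ι → Measure (X × ℤˣ))
    [∀ i, IsFiniteMeasure (μ i)] (h : X → ℤˣ) :
    risk (∑ i, (π i : ℝ≥0∞) • μ i) h = ∑ i, (π i : ℝ) * risk (μ i) h := by
  simp only [risk, Measure.coe_finsetSum, Finset.sum_apply, Measure.smul_apply, smul_eq_mul]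
  rw [ENNReal.toReal_sum fun i _ => ENNReal.mul_ne_top ENNReal.coe_ne_top (measure_ne_top _ _)]
  simp [ENNReal.toReal_mul]

section Divergences

variable {M : Set (X × ℤˣ → ℤˣ)} {m m' : X × ℤˣ → ℤˣ}

lemma dMMker_nonneg (κ : Kernel X ℤˣ) (P Q : Measure X) : 0 ≤ dMMker M κ P Q :=
  Real.iSup_nonneg fun _ => Real.iSup_nonneg fun _ => abs_nonneg _

lemma abs_sub_le_dMMker (hm : m ∈ M) (hm' : m' ∈ M) (κ : Kernel X ℤˣ) [IsMarkovKernel κ]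
    (P Q : Measure X) [IsProbabilityMeasure P] [IsProbabilityMeasure Q] :
    |∫ x, (κ x (xsec m m' x)).toReal ∂P - ∫ x, (κ x (xsec m m' x)).toReal ∂Q|
      ≤ dMMker M κ P Q :=
  le_ciSup₂_of_forall_le (f := fun a b : M => |∫ x, (κ x (xsec a.1 b.1 x)).toReal ∂P -
      ∫ x, (κ x (xsec a.1 b.1 x)).toReal ∂Q|)
    (fun _ _ => abs_sub_le_of_nonneg_of_le (integral_nonneg fun _ => ENNReal.toReal_nonneg)
      (integral_kernel_toReal_le_one P κ _) (integral_nonneg fun _ => ENNReal.toReal_nonneg)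
      (integral_kernel_toReal_le_one Q κ _))
    ⟨m, hm⟩ ⟨m', hm'⟩

lemma integral_kernel_xsec_le_add_dMMker (hm : m ∈ M) (hm' : m' ∈ M) (κ : Kernel X ℤˣ)
    [IsMarkovKernel κ] (P Q : Measure X) [IsProbabilityMeasure P] [IsProbabilityMeasure Q] :
    ∫ x, (κ x (xsec m m' x)).toReal ∂Q
      ≤ ∫ x, (κ x (xsec m m' x)).toReal ∂P + dMMker M κ P Q := by
  linarith [neg_abs_le (∫ x, (κ x (xsec m m' x)).toReal ∂P - ∫ x, (κ x (xsec m m' x)).toReal ∂Q),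
    abs_sub_le_dMMker hm hm' κ P Q]

variable (κ κ' : Kernel X ℤˣ)

lemma DM_nonneg (x : X) : 0 ≤ DM M κ κ' x :=
  Real.iSup_nonneg fun _ => Real.iSup_nonneg fun _ => abs_nonneg _

variable [IsMarkovKernel κ] [IsMarkovKernel κ']

lemma DM_le_one (x : X) : DM M κ κ' x ≤ 1 :=
  Real.iSup_le (fun _ => Real.iSup_le (fun _ => abs_toReal_sub_toReal_le_one _ _ _ _) zero_le_one)
    zero_le_one

lemma abs_sub_le_DM (hm : m ∈ M) (hm' : m' ∈ M) (x : X) :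
    |(κ x (xsec m m' x)).toReal - (κ' x (xsec m m' x)).toReal| ≤ DM M κ κ' x :=
  le_ciSup₂_of_forall_le (f := fun a b : M =>
      |(κ x (xsec a.1 b.1 x)).toReal - (κ' x (xsec a.1 b.1 x)).toReal|)
    (fun _ _ => abs_toReal_sub_toReal_le_one _ _ _ _) ⟨m, hm⟩ ⟨m', hm'⟩

variable (hM : M.Countable) (hMmeas : ∀ m ∈ M, Measurable m)
include hM hMmeas

lemma measurable_DM : Measurable (DM M κ κ') := by
  have := hM.to_subtype
  exact .iSup fun a => .iSup fun b =>
    ((measurable_kernel_xsec κ (hMmeas _ a.2) (hMmeas _ b.2)).sub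
      (measurable_kernel_xsec κ' (hMmeas _ a.2) (hMmeas _ b.2))).abs

lemma integrable_DM (Q : Measure X) [IsFiniteMeasure Q] : Integrable (DM M κ κ') Q :=
  .of_bound (measurable_DM κ κ' hM hMmeas).aestronglyMeasurable 1 (ae_of_all _ fun x => by
    simpa [abs_of_nonneg (DM_nonneg κ κ' x)] using DM_le_one κ κ' x)

lemma integral_kernel_xsec_le_add_integral_DM (hm : m ∈ M) (hm' : m' ∈ M) (Q : Measure X)
    [IsFiniteMeasure Q] :
    ∫ x, (κ' x (xsec m m' x)).toReal ∂Q
      ≤ ∫ x, (κ x (xsec m m' x)).toReal ∂Q + ∫ x, DM M κ κ' x ∂Q := by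
  have hint := integrable_kernel_xsec Q κ (hMmeas _ hm) (hMmeas _ hm')
  rw [← integral_add hint (integrable_DM κ κ' hM hMmeas Q)]
  refine integral_mono (integrable_kernel_xsec Q κ' (hMmeas _ hm) (hMmeas _ hm'))
    (hint.add (integrable_DM κ κ' hM hMmeas Q)) fun x => ?_
  linarith [neg_abs_le ((κ x (xsec m m' x)).toReal - (κ' x (xsec m m' x)).toReal),
    abs_sub_le_DM κ κ' hm hm' x]

end Divergences

theorem multi_source_generalization_bound_general
    {N : ℕ}
    (M : Set (X × ℤˣ → ℤˣ)) (hMcount : M.Countable) (hMmeas : ∀ m ∈ M, Measurable m)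
    (P : Fin N → Measure X) (hP : ∀ i, IsProbabilityMeasure (P i))
    (κ : Fin N → Kernel X ℤˣ) (hκ : ∀ i, IsMarkovKernel (κ i))
    (PT : Measure X) (hPT : IsProbabilityMeasure PT)
    (κT : Kernel X ℤˣ) (hκT : IsMarkovKernel κT)
    (π : Fin N → ℝ≥0) (hπ : ∑ i, π i = 1)
    (κbar : Kernel X ℤˣ) (hκbar : IsMarkovKernel κbar)
    (hmix : (∑ i, (π i : ℝ≥0∞) • (P i ⊗ₘ κ i)) = (∑ i, (π i : ℝ≥0∞) • P i) ⊗ₘ κbar)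
    (H : Set (X → ℤˣ)) (h : X → ℤˣ)
    (hmh : (fun z : X × ℤˣ => z.2 * h z.1) ∈ M)
    (hone : (fun _ : X × ℤˣ => (1 : ℤˣ)) ∈ M) :
    risk (PT ⊗ₘ κT) h ≤
      (∑ i, (π i : ℝ) * risk (P i ⊗ₘ κ i) h)
      + (⨆ i, ⨆ j, dMMker M (κ i) (P i) (P j))
      + (⨆ i, ⨆ j, ∫ x, DM M (κ i) (κ j) x ∂(P j))
      + dMMker M κbar (∑ i, (π i : ℝ≥0∞) • P i) PT
      + (∫ x, DM M κbar κT x ∂PT)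
      + (⨅ h' : H, ((∑ i, (π i : ℝ) * risk (P i ⊗ₘ κ i) h'.1) + risk (PT ⊗ₘ κT) h'.1)) := by
  set Pmix := ∑ i, (π i : ℝ≥0∞) • P i
  have : IsProbabilityMeasure Pmix := isProbabilityMeasure_sum_smul π hπ P
  have hmh_meas := hMmeas _ hmh
  have h_source : ∑ i, (π i : ℝ) * risk (P i ⊗ₘ κ i) h = risk (Pmix ⊗ₘ κbar) h := by
    rw [← risk_sum_smul, hmix]
  have h_kernel := integral_kernel_xsec_le_add_integral_DM κbar κT hMcount hMmeas hmh hone PT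
  have h_marginal := integral_kernel_xsec_le_add_dMMker hmh hone κbar Pmix PT
  have hζ_in : 0 ≤ ⨆ i, ⨆ j, dMMker M (κ i) (P i) (P j) :=
    Real.iSup_nonneg fun _ => Real.iSup_nonneg fun _ => dMMker_nonneg _ _ _
  have hη_in : 0 ≤ ⨆ i, ⨆ j, ∫ x, DM M (κ i) (κ j) x ∂(P j) :=
    Real.iSup_nonneg fun _ => Real.iSup_nonneg fun _ => integral_nonneg (DM_nonneg _ _)
  have hlam_π :
      0 ≤ ⨅ h' : H, ((∑ i, (π i : ℝ) * risk (P i ⊗ₘ κ i) h'.1) + risk (PT ⊗ₘ κT) h'.1) :=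
    Real.iInf_nonneg fun _ => add_nonneg
      (Finset.sum_nonneg fun i _ => mul_nonneg (π i).coe_nonneg (risk_nonneg _ _))
      (risk_nonneg _ _)
  rw [risk_compProd_eq_integral _ _ hmh_meas] at h_source ⊢
  linarith

/-- **Generalization bound with joint distributions on multiple source domains (Theorem A.3).** -/
theorem multi_source_generalization_bound
    {N : ℕ} (hN : 1 ≤ N)
    (M : Set (X × ℤˣ → ℤˣ)) (hMcount : M.Countable) (hMmeas : ∀ m ∈ M, Measurable m)
    (P : Fin N → Measure X) (hP : ∀ i, IsProbabilityMeasure (P i))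
    (κ : Fin N → Kernel X ℤˣ) (hκ : ∀ i, IsMarkovKernel (κ i))
    (PT : Measure X) (hPT : IsProbabilityMeasure PT)
    (κT : Kernel X ℤˣ) (hκT : IsMarkovKernel κT)
    (π : Fin N → ℝ≥0) (hπ : ∑ i, π i = 1)
    (κbar : Kernel X ℤˣ) (hκbar : IsMarkovKernel κbar)
    (hmix : (∑ i, (π i : ℝ≥0∞) • (P i ⊗ₘ κ i)) = (∑ i, (π i : ℝ≥0∞) • P i) ⊗ₘ κbar)
    (H : Set (X → ℤˣ)) (hH : H.Nonempty) (hHmeas : ∀ h' ∈ H, Measurable h')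
    (h : X → ℤˣ) (hmeas : Measurable h)
    (hmh : (fun z : X × ℤˣ => z.2 * h z.1) ∈ M)
    (hone : (fun _ : X × ℤˣ => (1 : ℤˣ)) ∈ M) :
    risk (PT ⊗ₘ κT) h ≤
      (∑ i, (π i : ℝ) * risk (P i ⊗ₘ κ i) h)
      + (⨆ i, ⨆ j, dMMker M (κ i) (P i) (P j))
      + (⨆ i, ⨆ j, ∫ x, DM M (κ i) (κ j) x ∂(P j))
      + dMMker M κbar (∑ i, (π i : ℝ≥0∞) • P i) PT
      + (∫ x, DM M κbar κT x ∂PT)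
      + (⨅ h' : H, ((∑ i, (π i : ℝ) * risk (P i ⊗ₘ κ i) h'.1) + risk (PT ⊗ₘ κT) h'.1)) :=
  multi_source_generalization_bound_general M hMcount hMmeas P hP κ hκ PT hPT κT hκT π hπ κbar hκbar
    hmix H h hmh hone

end IDG
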